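/- Let m be odd and n be even, and let R ∈ ℤ^m, S ∈ ℤ^n be initially nonincreasing, palindromic nonnegative integer vectors with equal component sums, every component of R at most n, every component of S at most m, and with the middle component r_⌈m/2⌉ even. Let R' ∈ ℤ^{m−1} be obtained from R by deleting r_⌈m/2⌉, and let S' be obtained from S by decreasing by one its first r_⌈m/2⌉/2 and last r_⌈m/2⌉/2 components. Then there exists an m×n (0,1)-matrix with row sum vector R, column sum vector S, and invariant under ρ_π if and only if there exists an (m−1)×n (0,1)-matrix with row sum vector R', column sum vector S', and invariant under ρ_π. -/

import Mathlib

open Finset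

lemma cnt (n c : ℕ) (hc : c ≤ n) : ∑ x : Fin n, (if (x:ℕ) < c then (1:ℤ) else 0) = c := by
  rw [Fin.sum_univ_eq_sum_range (fun x => if x < c then (1:ℤ) else 0), Finset.sum_boole]
  have : (Finset.range n).filter (fun x => x < c) = Finset.range c := by
    ext x; simp; omega
  simp [this]

lemma cnt2 (n t : ℕ) (h2 : 2*t ≤ n) :
    ∑ x : Fin n, (if (x:ℕ) < t ∨ n - t ≤ (x:ℕ) then (1:ℤ) else 0) = 2*t := by
  have h : ∀ x : Fin n, (if (x:ℕ) < t ∨ n - t ≤ (x:ℕ) then (1:ℤ) else 0)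
      = (if (x:ℕ) < t then (1:ℤ) else 0) + (1 - (if (x:ℕ) < n - t then (1:ℤ) else 0)) := by
    intro x; have := x.isLt; split_ifs <;> omega
  rw [Finset.sum_congr rfl (fun x _ => h x)]
  rw [Finset.sum_add_distrib, Finset.sum_sub_distrib, cnt n t (by omega), cnt n (n-t) (by omega)]
  simp
  omega

lemma sqval {m : ℕ} (hm1 : m - 1 + 1 = m) (hm : m % 2 = 1) (i : Fin (m-1)) :
    ((Fin.cast hm1 ((⟨m/2, by omega⟩ : Fin (m-1+1)).succAbove i)) : Fin m).val
      = if (i:ℕ) < m/2 then (i:ℕ) else (i:ℕ)+1 := by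
  have hi := i.isLt
  simp only [Fin.succAbove, Fin.lt_def]
  split_ifs <;> simp_all <;> omega

lemma midrev {m : ℕ} (hm : m % 2 = 1) : (⟨m/2, by omega⟩ : Fin m).rev = ⟨m/2, by omega⟩ := by
  simp [Fin.ext_iff, Fin.val_rev]; omega

lemma sumM {m : ℕ} (hm1 : m - 1 + 1 = m) (hm : m % 2 = 1) (f : Fin m → ℤ) :
    ∑ i, f i = f ⟨m/2, by omega⟩
      + ∑ i : Fin (m-1), f (Fin.cast hm1 ((⟨m/2, by omega⟩ : Fin (m-1+1)).succAbove i)) := by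
  rw [← Fin.sum_congr' f hm1, Fin.sum_univ_succAbove (fun i => f (Fin.cast hm1 i)) ⟨m/2, by omega⟩]
  rfl

lemma halfsum {n : ℕ} (hn : n % 2 = 0) (f : Fin n → ℤ) (hf : ∀ j, f j = f j.rev) :
    ∑ j, f j = 2 * ∑ j ∈ univ.filter (fun j : Fin n => (j:ℕ) < n/2), f j := by
  rw [← Finset.sum_filter_add_sum_filter_not univ (fun j : Fin n => (j:ℕ) < n/2) f]
  have h2 : ∑ j ∈ univ.filter (fun j : Fin n => ¬ (j:ℕ) < n/2), f j
       = ∑ j ∈ univ.filter (fun j : Fin n => (j:ℕ) < n/2), f j := by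
    apply Finset.sum_nbij' Fin.rev Fin.rev
    · intro a ha; simp only [Finset.mem_filter, Finset.mem_univ, true_and] at ha ⊢
      have := a.isLt; rw [Fin.val_rev]; omega
    · intro a ha; simp only [Finset.mem_filter, Finset.mem_univ, true_and] at ha ⊢
      have := a.isLt; rw [Fin.val_rev]; omega
    · intro a _; exact a.rev_rev
    · intro a _; exact a.rev_rev
    · intro a _; exact hf a
  rw [h2]; ring

set_option maxHeartbeats 4000000 in
lemma done (m n : ℕ) (hm : m % 2 = 1) (hn : n % 2 = 0)
    (R : Fin m → ℤ) (S : Fin n → ℤ) (t : ℕ)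
    (ht : R ⟨m / 2, by omega⟩ = 2 * t) (htn : 2 * t ≤ n)
    (A : Matrix (Fin m) (Fin n) ℤ)
    (h01 : ∀ i j, A i j = 0 ∨ A i j = 1)
    (hrow : ∀ i, ∑ j, A i j = R i)
    (hcol : ∀ j, ∑ i, A i j = S j)
    (hsym : ∀ i j, A i j = A i.rev j.rev)
    (hsorted : ∀ k j : Fin n, (k:ℕ) < (j:ℕ) → (j:ℕ) < n/2 →
      A ⟨m/2, by omega⟩ k = 0 → A ⟨m/2, by omega⟩ j = 0) :
    (∃ A' : Matrix (Fin (m - 1)) (Fin n) ℤ,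
        (∀ i j, A' i j = 0 ∨ A' i j = 1) ∧
        (∀ i : Fin (m - 1), ∑ j, A' i j =
          (if (i : ℕ) < m / 2 then R ⟨i.val, by have := i.isLt; omega⟩
            else R ⟨i.val + 1, by have := i.isLt; omega⟩)) ∧
        (∀ j : Fin n, ∑ i, A' i j =
          (if (j : ℕ) < t ∨ n - t ≤ (j : ℕ) then S j - 1 else S j)) ∧
        (∀ i j, A' i j = A' i.rev j.rev)) := by
  have hm1 : m - 1 + 1 = m := by omega
  set mid : Fin m := ⟨m/2, by omega⟩ with hmiddef
  have hmr : mid.rev = mid := midrev hm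
  have hmidsym : ∀ j', A mid j' = A mid j'.rev := by
    intro j'; rw [hsym mid j', hmr]
  have hH : ∑ j' ∈ univ.filter (fun j' : Fin n => (j':ℕ) < n/2), A mid j' = t := by
    have h1 := halfsum hn (A mid) hmidsym
    rw [hrow mid, ht] at h1
    linarith
  -- left-half values
  have C1 : ∀ j₀ : Fin n, (j₀:ℕ) < t → A mid j₀ = 1 := by
    intro j₀ hj₀
    have hj₀h : (j₀:ℕ) < n/2 := by omega
    rcases h01 mid j₀ with h0 | h1
    · exfalso
      have bound : ∀ j' ∈ univ.filter (fun j' : Fin n => (j':ℕ) < n/2),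
          A mid j' ≤ (if (j':ℕ) < (j₀:ℕ) then (1:ℤ) else 0) := by
        intro j' hj'
        simp only [Finset.mem_filter, Finset.mem_univ, true_and] at hj'
        by_cases hlt : (j':ℕ) < (j₀:ℕ)
        · rw [if_pos hlt]
          rcases h01 mid j' with h | h <;> rw [h] <;> norm_num
        · rw [if_neg hlt]
          rcases eq_or_lt_of_le (not_lt.mp hlt) with he | hgt
          · have : j' = j₀ := Fin.ext he.symm
            rw [this, h0]
          · rw [hsorted j₀ j' hgt hj' h0]
      have hle := Finset.sum_le_sum bound
      rw [hH] at hle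
      have hle2 : ∑ j' ∈ univ.filter (fun j' : Fin n => (j':ℕ) < n/2),
          (if (j':ℕ) < (j₀:ℕ) then (1:ℤ) else 0)
          ≤ ∑ j' : Fin n, (if (j':ℕ) < (j₀:ℕ) then (1:ℤ) else 0) := by
        apply Finset.sum_le_sum_of_subset_of_nonneg (Finset.subset_univ _)
        intro x _ _; split_ifs <;> norm_num
      rw [cnt n (j₀:ℕ) (by omega)] at hle2
      have := hle.trans hle2
      omega
    · exact h1
  have C2 : ∀ j₀ : Fin n, t ≤ (j₀:ℕ) → (j₀:ℕ) < n/2 → A mid j₀ = 0 := by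
    intro j₀ ht₀ hj₀h
    rcases h01 mid j₀ with h0 | h1
    · exact h0
    · exfalso
      have bound : ∀ j' ∈ univ.filter (fun j' : Fin n => (j':ℕ) < n/2),
          (if (j':ℕ) < (j₀:ℕ) + 1 then (1:ℤ) else 0) ≤ A mid j' := by
        intro j' hj'
        simp only [Finset.mem_filter, Finset.mem_univ, true_and] at hj'
        by_cases hle : (j':ℕ) < (j₀:ℕ) + 1
        · rw [if_pos hle]
          rcases eq_or_lt_of_le (Nat.lt_succ_iff.mp hle) with he | hgt
          · have : j' = j₀ := Fin.ext he
            rw [this, h1]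
          · rcases h01 mid j' with h | h
            · exact absurd (hsorted j' j₀ hgt hj₀h h) (by rw [h1]; norm_num)
            · rw [h]
        · rw [if_neg hle]
          rcases h01 mid j' with h | h <;> rw [h] <;> norm_num
      have hle := Finset.sum_le_sum bound
      rw [hH] at hle
      have heq : ∑ j' ∈ univ.filter (fun j' : Fin n => (j':ℕ) < n/2),
          (if (j':ℕ) < (j₀:ℕ) + 1 then (1:ℤ) else 0)
          = ∑ j' : Fin n, (if (j':ℕ) < (j₀:ℕ) + 1 then (1:ℤ) else 0) := by
        apply Finset.sum_subset (Finset.subset_univ _)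
        intro x _ hx
        simp only [Finset.mem_filter, Finset.mem_univ, true_and, not_lt] at hx
        rw [if_neg (by omega)]
      rw [heq, cnt n ((j₀:ℕ)+1) (by omega)] at hle
      push_cast at hle
      omega
  have hval : ∀ j' : Fin n, A mid j' =
      (if (j':ℕ) < t ∨ n - t ≤ (j':ℕ) then 1 else 0) := by
    intro j'
    have hj' := j'.isLt
    by_cases hhalf : (j':ℕ) < n/2
    · by_cases hlt : (j':ℕ) < t
      · rw [C1 j' hlt, if_pos (Or.inl hlt)]
      · rw [C2 j' (by omega) hhalf, if_neg (by omega)]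
    · rw [hmidsym j']
      have hrv : (j'.rev:ℕ) = n - 1 - (j':ℕ) := by rw [Fin.val_rev]; omega
      by_cases hlt : n - 1 - (j':ℕ) < t
      · rw [C1 j'.rev (by omega), if_pos (by omega)]
      · rw [C2 j'.rev (by omega) (by omega), if_neg (by omega)]
  -- construct A'
  have hrevcompat : ∀ i' : Fin (m-1),
      (Fin.cast hm1 ((⟨m/2, by omega⟩ : Fin (m-1+1)).succAbove i')).rev
        = Fin.cast hm1 ((⟨m/2, by omega⟩ : Fin (m-1+1)).succAbove i'.rev) := by
    intro i'
    have h1 := sqval hm1 hm i'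
    have h2 := sqval hm1 hm i'.rev
    have h3 : (i'.rev:ℕ) = m - 1 - 1 - (i':ℕ) := by rw [Fin.val_rev]; omega
    have hi' := i'.isLt
    refine Fin.ext ?_
    rw [Fin.val_rev, h1, h2, h3]
    split_ifs <;> omega
  refine ⟨fun i' j' => A (Fin.cast hm1 ((⟨m/2, by omega⟩ : Fin (m-1+1)).succAbove i')) j',
    ?_, ?_, ?_, ?_⟩
  · intro i' j'; exact h01 _ _
  · intro i'
    rw [hrow]
    have h1 := sqval hm1 hm i'
    by_cases h : (i':ℕ) < m/2
    · rw [if_pos h]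
      exact congrArg R (Fin.ext (by rw [h1, if_pos h]))
    · rw [if_neg h]
      exact congrArg R (Fin.ext (by rw [h1, if_neg h]))
  · intro j'
    have h2 : ∑ i, A i j' = A mid j'
        + ∑ i' : Fin (m-1), A (Fin.cast hm1 ((⟨m/2, by omega⟩ : Fin (m-1+1)).succAbove i')) j' :=
      sumM hm1 hm (fun i => A i j')
    have hc := hcol j'
    rw [h2] at hc
    have hmv := hval j'
    split_ifs at hmv ⊢ with hcond
    · linarith
    · linarith
  · intro i' j'
    exact (hsym _ j').trans (congrFun (congrArg A (hrevcompat i')) j'.rev)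

set_option maxHeartbeats 2000000 in
lemma step (m n : ℕ) (hm : m % 2 = 1) (hn : n % 2 = 0)
    (R : Fin m → ℤ) (S : Fin n → ℤ)
    (A : Matrix (Fin m) (Fin n) ℤ)
    (h01 : ∀ i j, A i j = 0 ∨ A i j = 1)
    (hrow : ∀ i, ∑ j, A i j = R i)
    (hcol : ∀ j, ∑ i, A i j = S j)
    (hsym : ∀ i j, A i j = A i.rev j.rev)
    (k j : Fin n) (hkj : (k:ℕ) < (j:ℕ)) (hjh : (j:ℕ) < n/2)
    (hAk : A ⟨m/2, by omega⟩ k = 0) (hAj : A ⟨m/2, by omega⟩ j = 1)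
    (hS : S j ≤ S k) :
    ∃ A₂ : Matrix (Fin m) (Fin n) ℤ,
      (∀ i j, A₂ i j = 0 ∨ A₂ i j = 1) ∧ (∀ i, ∑ j, A₂ i j = R i) ∧
      (∀ j, ∑ i, A₂ i j = S j) ∧ (∀ i j, A₂ i j = A₂ i.rev j.rev) ∧
      (∑ j' : Fin n, (if (j':ℕ) < n/2 ∧ A₂ ⟨m/2, by omega⟩ j' = 1 then (j':ℕ) else 0)) + (j:ℕ)
        = (∑ j' : Fin n, (if (j':ℕ) < n/2 ∧ A ⟨m/2, by omega⟩ j' = 1 then (j':ℕ) else 0)) + (k:ℕ) := by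
  set mid : Fin m := ⟨m/2, by omega⟩ with hmiddef
  have hmr : mid.rev = mid := by
    simp only [hmiddef, Fin.ext_iff, Fin.val_rev]; omega
  have hkh : (k:ℕ) < n/2 := by omega
  have hkrv : (k.rev:ℕ) = n - 1 - (k:ℕ) := by rw [Fin.val_rev]; omega
  have hjrv : (j.rev:ℕ) = n - 1 - (j:ℕ) := by rw [Fin.val_rev]; omega
  have hjn := j.isLt
  -- column distinctness
  have nkj : k ≠ j := by simp [Fin.ext_iff]; omega
  have njk : j ≠ k := Ne.symm nkj
  have nkkr : k ≠ k.rev := by simp [Fin.ext_iff, hkrv]; omega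
  have nkjr : k ≠ j.rev := by simp [Fin.ext_iff, hjrv]; omega
  have njkr : j ≠ k.rev := by simp [Fin.ext_iff, hkrv]; omega
  have njjr : j ≠ j.rev := by simp [Fin.ext_iff, hjrv]; omega
  have nkrjr : k.rev ≠ j.rev := by simp [Fin.ext_iff, hkrv, hjrv]; omega
  have nkrk : k.rev ≠ k := Ne.symm nkkr
  have njrj : j.rev ≠ j := Ne.symm njjr
  have nkrj : k.rev ≠ j := Ne.symm njkr
  have njrk : j.rev ≠ k := Ne.symm nkjr
  have njrkr : j.rev ≠ k.rev := Ne.symm nkrjr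
  -- symmetric middle values
  have hAkr : A mid k.rev = 0 := by rw [← hmr, ← hsym]; exact hAk
  have hAjr : A mid j.rev = 1 := by rw [← hmr, ← hsym]; exact hAj
  -- pivot row
  have key : ∃ i : Fin m, i ≠ mid ∧ A i k = 1 ∧ A i j = 0 := by
    by_contra hc
    push_neg at hc
    have hle : ∀ i ∈ univ.erase mid, A i k ≤ A i j := by
      intro i hi
      have hine : i ≠ mid := (Finset.mem_erase.mp hi).1
      rcases h01 i k with h | h
      · rcases h01 i j with h' | h' <;> rw [h, h'] <;> norm_num
      · have := hc i hine h
        rcases h01 i j with h' | h'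
        · exact absurd h' this
        · rw [h, h']
    have h1 : ∑ i ∈ univ.erase mid, A i k = S k := by
      have := Finset.add_sum_erase univ (fun i => A i k) (Finset.mem_univ mid)
      rw [hcol k] at this
      rw [← this, hAk]; ring
    have h2 : ∑ i ∈ univ.erase mid, A i j = S j - 1 := by
      have := Finset.add_sum_erase univ (fun i => A i j) (Finset.mem_univ mid)
      rw [hcol j] at this
      rw [← this, hAj]; ring
    have := Finset.sum_le_sum hle
    rw [h1, h2] at this
    omega
  obtain ⟨i, hine, hik1, hij0⟩ := key
  have hirne : i.rev ≠ mid := by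
    intro h; exact hine (by rw [← Fin.rev_rev i, h, hmr])
  have hiri : i ≠ i.rev := by
    intro h
    apply hine
    have h1 := Fin.val_rev i
    have h2 : (i:ℕ) = (i.rev:ℕ) := by rw [← h]
    have := i.isLt
    simp only [hmiddef, Fin.ext_iff]; omega
  have hirk : A i.rev k.rev = 1 := by rw [← hsym]; exact hik1
  have hirj : A i.rev j.rev = 0 := by rw [← hsym]; exact hij0
  have nmi : mid ≠ i := Ne.symm hine
  have nmir : mid ≠ i.rev := Ne.symm hirne
  have niri : i.rev ≠ i := Ne.symm hiri
  set A₂ : Matrix (Fin m) (Fin n) ℤ := fun i' j' => A i' j'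
    + (if i' = mid then 1 else 0) * ((if j' = k then 1 else 0) - (if j' = j then 1 else 0)
        + (if j' = k.rev then 1 else 0) - (if j' = j.rev then 1 else 0))
    + (if i' = i then 1 else 0) * ((if j' = j then 1 else 0) - (if j' = k then 1 else 0))
    + (if i' = i.rev then 1 else 0) * ((if j' = j.rev then 1 else 0) - (if j' = k.rev then 1 else 0))
    with hA2
  have hA2mid : ∀ j', A₂ mid j' = A mid j'
      + ((if j' = k then 1 else 0) - (if j' = j then 1 else 0)
        + (if j' = k.rev then 1 else 0) - (if j' = j.rev then 1 else 0)) := by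
    intro j'
    rw [hA2]; dsimp only
    rw [if_pos rfl, if_neg nmi, if_neg nmir]; ring
  refine ⟨A₂, ?_, ?_, ?_, ?_, ?_⟩
  · -- 0/1
    intro i' j'
    have h := h01 i' j'
    rw [hA2]; dsimp only
    rcases eq_or_ne i' mid with rfl | hi1
    · rw [if_pos rfl, if_neg nmi, if_neg nmir]
      rcases eq_or_ne j' k with rfl | hj1
      · simp [nkj, nkkr, nkjr, hAk]
      rcases eq_or_ne j' j with rfl | hj2
      · simp [njk, njkr, njjr, hAj]
      rcases eq_or_ne j' k.rev with rfl | hj3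
      · simp [nkrk, nkrj, nkrjr, hAkr]
      rcases eq_or_ne j' j.rev with rfl | hj4
      · simp [njrk, njrj, njrkr, hAjr]
      · simp [hj1, hj2, hj3, hj4, h]
    rcases eq_or_ne i' i with rfl | hi2
    · rw [if_neg hi1, if_pos rfl, if_neg hiri]
      rcases eq_or_ne j' k with rfl | hj1
      · simp [nkj, hik1]
      rcases eq_or_ne j' j with rfl | hj2
      · simp [njk, hij0]
      · simp [hj1, hj2, h]
    rcases eq_or_ne i' i.rev with rfl | hi3
    · rw [if_neg hi1, if_neg hi2, if_pos rfl]
      rcases eq_or_ne j' k.rev with rfl | hj1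
      · simp [nkrjr, hirk]
      rcases eq_or_ne j' j.rev with rfl | hj2
      · simp [njrkr, hirj]
      · simp [hj1, hj2, h]
    · simp [hi1, hi2, hi3, h]
  · -- row sums
    intro i'
    rw [hA2]; dsimp only
    rw [Finset.sum_add_distrib, Finset.sum_add_distrib, Finset.sum_add_distrib,
      ← Finset.mul_sum, ← Finset.mul_sum, ← Finset.mul_sum, hrow]
    rw [Finset.sum_sub_distrib, Finset.sum_add_distrib, Finset.sum_sub_distrib,
      Finset.sum_sub_distrib, Finset.sum_sub_distrib]
    simp [Finset.sum_ite_eq']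
  · -- column sums
    intro j'
    rw [hA2]; dsimp only
    rw [Finset.sum_add_distrib, Finset.sum_add_distrib, Finset.sum_add_distrib,
      ← Finset.sum_mul, ← Finset.sum_mul, ← Finset.sum_mul, hcol]
    simp only [Finset.sum_ite_eq', Finset.mem_univ, if_true]
    ring
  · -- symmetry
    intro i' j'
    rw [hA2]; dsimp only
    simp only [Fin.rev_eq_iff, Fin.rev_rev, hmr]
    rw [← hsym i' j']
    ring
  · -- measure
    have keyterm : ∀ j' : Fin n,
        (if (j':ℕ) < n/2 ∧ A₂ mid j' = 1 then ((j':ℕ):ℕ) else 0) + (if j' = j then (j:ℕ) else 0)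
          = (if (j':ℕ) < n/2 ∧ A mid j' = 1 then ((j':ℕ):ℕ) else 0) + (if j' = k then (k:ℕ) else 0) := by
      intro j'
      rw [hA2mid j']
      rcases eq_or_ne j' k with rfl | hj1
      · simp [nkj, nkkr, nkjr, hAk, hkh]
      rcases eq_or_ne j' j with rfl | hj2
      · simp [njk, njkr, njjr, hAj, hjh]
      rcases eq_or_ne j' k.rev with rfl | hj3
      · have h2 : ¬ (n - ((k:ℕ) + 1) < n / 2) := by omega
        simp [nkrk, nkrj, nkrjr, h2]
      rcases eq_or_ne j' j.rev with rfl | hj4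
      · have h2 : ¬ (n - ((j:ℕ) + 1) < n / 2) := by omega
        simp [njrk, njrj, njrkr, h2]
      · simp [hj1, hj2, hj3, hj4]
    have hsum := Finset.sum_congr (rfl : (univ : Finset (Fin n)) = univ) (fun j' _ => keyterm j')
    rw [Finset.sum_add_distrib, Finset.sum_add_distrib] at hsum
    simpa [Finset.sum_ite_eq'] using hsum

set_option maxHeartbeats 1000000 in
lemma fwd (m n : ℕ) (hm : m % 2 = 1) (hn : n % 2 = 0)
    (R : Fin m → ℤ) (S : Fin n → ℤ) (t : ℕ)
    (ht : R ⟨m / 2, by omega⟩ = 2 * t) (htn : 2 * t ≤ n)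
    (hSmono : ∀ i j : Fin n, i ≤ j → (j : ℕ) < n / 2 → S j ≤ S i) :
    ∀ N (A : Matrix (Fin m) (Fin n) ℤ),
      (∀ i j, A i j = 0 ∨ A i j = 1) → (∀ i, ∑ j, A i j = R i) →
      (∀ j, ∑ i, A i j = S j) → (∀ i j, A i j = A i.rev j.rev) →
      (∑ j' : Fin n, (if (j':ℕ) < n/2 ∧ A ⟨m/2, by omega⟩ j' = 1 then (j':ℕ) else 0)) ≤ N →
      (∃ A' : Matrix (Fin (m - 1)) (Fin n) ℤ,
        (∀ i j, A' i j = 0 ∨ A' i j = 1) ∧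
        (∀ i : Fin (m - 1), ∑ j, A' i j =
          (if (i : ℕ) < m / 2 then R ⟨i.val, by have := i.isLt; omega⟩
            else R ⟨i.val + 1, by have := i.isLt; omega⟩)) ∧
        (∀ j : Fin n, ∑ i, A' i j =
          (if (j : ℕ) < t ∨ n - t ≤ (j : ℕ) then S j - 1 else S j)) ∧
        (∀ i j, A' i j = A' i.rev j.rev)) := by
  intro N
  induction N using Nat.strong_induction_on with
  | _ N ih =>
    intro A h01 hrow hcol hsym hμ
    by_cases hbp : ∃ k j : Fin n, (k:ℕ) < (j:ℕ) ∧ (j:ℕ) < n/2 ∧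
        A ⟨m/2, by omega⟩ k = 0 ∧ A ⟨m/2, by omega⟩ j = 1
    · obtain ⟨k, j, hkj, hjh, h0, h1⟩ := hbp
      have hS : S j ≤ S k := hSmono k j (by rw [Fin.le_def]; omega) hjh
      obtain ⟨A₂, p1, p2, p3, p4, hμ2⟩ :=
        step m n hm hn R S A h01 hrow hcol hsym k j hkj hjh h0 h1 hS
      refine ih _ ?_ A₂ p1 p2 p3 p4 (Nat.le_refl _)
      omega
    · push_neg at hbp
      apply done m n hm hn R S t ht htn A h01 hrow hcol hsym
      intro k j hkj hjh hk0
      rcases h01 ⟨m/2, by omega⟩ j with h | h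
      · exact h
      · exact absurd h (hbp k j hkj hjh hk0)

set_option maxHeartbeats 1000000 in
lemma bwd (m n : ℕ) (hm : m % 2 = 1) (hn : n % 2 = 0)
    (R : Fin m → ℤ) (S : Fin n → ℤ) (t : ℕ)
    (ht : R ⟨m / 2, by omega⟩ = 2 * t) (htn : 2 * t ≤ n)
    (A' : Matrix (Fin (m - 1)) (Fin n) ℤ)
    (h01 : ∀ i j, A' i j = 0 ∨ A' i j = 1)
    (hrow : ∀ i : Fin (m - 1), ∑ j, A' i j =
          (if (i : ℕ) < m / 2 then R ⟨i.val, by have := i.isLt; omega⟩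
            else R ⟨i.val + 1, by have := i.isLt; omega⟩))
    (hcol : ∀ j : Fin n, ∑ i, A' i j =
          (if (j : ℕ) < t ∨ n - t ≤ (j : ℕ) then S j - 1 else S j))
    (hsym : ∀ i j, A' i j = A' i.rev j.rev) :
    (∃ A : Matrix (Fin m) (Fin n) ℤ,
        (∀ i j, A i j = 0 ∨ A i j = 1) ∧
        (∀ i, ∑ j, A i j = R i) ∧
        (∀ j, ∑ i, A i j = S j) ∧
        (∀ i j, A i j = A i.rev j.rev)) := by
  have hm1 : m - 1 + 1 = m := by omega
  set A : Matrix (Fin m) (Fin n) ℤ := fun i j =>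
    if h : (i : ℕ) < m / 2 then A' ⟨i, by omega⟩ j
    else if h2 : (i : ℕ) = m / 2 then (if (j:ℕ) < t ∨ n - t ≤ (j:ℕ) then 1 else 0)
    else A' ⟨(i:ℕ) - 1, by have := i.isLt; omega⟩ j with hA
  refine ⟨A, ?_, ?_, ?_, ?_⟩
  · intro i j
    rw [hA]; dsimp only
    split_ifs with h h2 h3
    · exact h01 _ _
    · right; rfl
    · left; rfl
    · exact h01 _ _
  · intro i
    rcases lt_trichotomy (i:ℕ) (m/2) with h | h | h
    · have : ∀ j, A i j = A' ⟨i, by omega⟩ j := by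
        intro j; rw [hA]; dsimp only; rw [dif_pos h]
      rw [Finset.sum_congr rfl (fun j _ => this j), hrow]
      rw [if_pos h]
    · have : ∀ j, A i j = (if (j:ℕ) < t ∨ n - t ≤ (j:ℕ) then 1 else 0) := by
        intro j; rw [hA]; dsimp only; rw [dif_neg (by omega), dif_pos h]
      rw [Finset.sum_congr rfl (fun j _ => this j), cnt2 n t htn, ← ht]
      congr 1
      exact Fin.ext h.symm
    · have : ∀ j, A i j = A' ⟨(i:ℕ) - 1, by have := i.isLt; omega⟩ j := by
        intro j; rw [hA]; dsimp only; rw [dif_neg (by omega), dif_neg (by omega)]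
      rw [Finset.sum_congr rfl (fun j _ => this j), hrow]
      rw [if_neg (by simp; omega)]
      congr 1
      exact Fin.ext (by simp; omega)
  · intro j
    rw [sumM hm1 hm (fun i => A i j)]
    have hmid : A ⟨m/2, by omega⟩ j = (if (j:ℕ) < t ∨ n - t ≤ (j:ℕ) then 1 else 0) := by
      rw [hA]; dsimp only; rw [dif_neg (by simp), dif_pos rfl]
    have hrest : ∀ i' : Fin (m-1),
        A (Fin.cast hm1 ((⟨m/2, by omega⟩ : Fin (m-1+1)).succAbove i')) j = A' i' j := by
      intro i'
      have hv := sqval hm1 hm i'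
      have hi' := i'.isLt
      rw [hA]; dsimp only
      by_cases h : (i':ℕ) < m/2
      · rw [dif_pos (by rw [hv, if_pos h]; exact h)]
        congr 1
        exact Fin.ext (by rw [Fin.coe_cast] at hv; simp [hv, if_pos h])
      · rw [dif_neg (by rw [hv, if_neg h]; omega), dif_neg (by rw [hv, if_neg h]; omega)]
        congr 1
        exact Fin.ext (by rw [Fin.coe_cast] at hv; simp [hv, if_neg h])
    rw [hmid, Finset.sum_congr rfl (fun i' _ => hrest i'), hcol]
    split_ifs <;> ring
  · intro i j
    have hjr : (j.rev : ℕ) = n - 1 - (j:ℕ) := by rw [Fin.val_rev]; omega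
    have hir : (i.rev : ℕ) = m - 1 - (i:ℕ) := by rw [Fin.val_rev]; omega
    have hj := j.isLt
    have hi := i.isLt
    rcases lt_trichotomy (i:ℕ) (m/2) with h | h | h
    · have c1 : ¬((i.rev:ℕ) < m/2) := by omega
      have c2 : ¬((i.rev:ℕ) = m/2) := by omega
      rw [hA]; dsimp only
      rw [dif_pos h, dif_neg c1, dif_neg c2]
      rw [hsym ⟨i, by omega⟩ j]
      congr 1
      refine Fin.ext ?_
      simp only [Fin.val_rev]
      simp only [hir] at *
      omega
    · have c0 : ¬((i:ℕ) < m/2) := by omega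
      have c1 : ¬((i.rev:ℕ) < m/2) := by omega
      have c2 : (i.rev:ℕ) = m/2 := by omega
      rw [hA]; dsimp only
      rw [dif_neg c0, dif_pos h, dif_neg c1, dif_pos c2]
      have : ((j.rev:ℕ) < t ∨ n - t ≤ (j.rev:ℕ)) ↔ ((j:ℕ) < t ∨ n - t ≤ (j:ℕ)) := by omega
      simp only [this]
    · have c0 : ¬((i:ℕ) < m/2) := by omega
      have c0' : ¬((i:ℕ) = m/2) := by omega
      have c1 : ((i.rev:ℕ) < m/2) := by omega
      rw [hA]; dsimp only
      rw [dif_neg c0, dif_neg c0', dif_pos c1]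
      rw [hsym ⟨(i:ℕ) - 1, by omega⟩ j]
      congr 1
      refine Fin.ext ?_
      simp only [Fin.val_rev]
      simp only [hir] at *
      omega

/-- **ρ_π-invariant (0,1)-matrices, `m` odd and `n` even: reduction.**
Assume `R`, `S` are initially nonincreasing palindromic nonnegative integer
vectors with equal sums, components bounded by `n` resp. `m`, and the middle
component `r_{⌈m/2⌉} = 2t` even.  Then `𝒜^π(R,S) ≠ ∅` iff `𝒜^π(R',S') ≠ ∅`,
where `R'` deletes the middle component of `R` and `S'` decreases the first
`t` and last `t` components of `S` by one. -/
theorem centrosymmetric_zeroOne_odd_even (m n : ℕ)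
    (hm : m % 2 = 1) (hn : n % 2 = 0)
    (R : Fin m → ℤ) (S : Fin n → ℤ)
    (hR0 : ∀ i, 0 ≤ R i) (hS0 : ∀ j, 0 ≤ S j)
    (hsum : ∑ i, R i = ∑ j, S j)
    (hRle : ∀ i, R i ≤ n) (hSle : ∀ j, S j ≤ m)
    (hRpal : ∀ i, R i = R i.rev) (hSpal : ∀ j, S j = S j.rev)
    (hRmono : ∀ i j : Fin m, i ≤ j → (j : ℕ) < m / 2 → R j ≤ R i)
    (hSmono : ∀ i j : Fin n, i ≤ j → (j : ℕ) < n / 2 → S j ≤ S i)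
    (t : ℕ) (ht : R ⟨m / 2, by omega⟩ = 2 * t) :
    (∃ A : Matrix (Fin m) (Fin n) ℤ,
        (∀ i j, A i j = 0 ∨ A i j = 1) ∧
        (∀ i, ∑ j, A i j = R i) ∧
        (∀ j, ∑ i, A i j = S j) ∧
        (∀ i j, A i j = A i.rev j.rev)) ↔
    (∃ A' : Matrix (Fin (m - 1)) (Fin n) ℤ,
        (∀ i j, A' i j = 0 ∨ A' i j = 1) ∧
        (∀ i : Fin (m - 1), ∑ j, A' i j =
          (if (i : ℕ) < m / 2 then R ⟨i.val, by have := i.isLt; omega⟩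
            else R ⟨i.val + 1, by have := i.isLt; omega⟩)) ∧
        (∀ j : Fin n, ∑ i, A' i j =
          (if (j : ℕ) < t ∨ n - t ≤ (j : ℕ) then S j - 1 else S j)) ∧
        (∀ i j, A' i j = A' i.rev j.rev)) := by
  have htn : 2 * t ≤ n := by
    have h1 := hRle ⟨m / 2, by omega⟩
    rw [ht] at h1
    omega
  constructor
  · rintro ⟨A, h01, hrow, hcol, hsym⟩
    exact fwd m n hm hn R S t ht htn hSmono
      (∑ j' : Fin n, (if (j':ℕ) < n/2 ∧ A ⟨m/2, by omega⟩ j' = 1 then (j':ℕ) else 0))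
      A h01 hrow hcol hsym (Nat.le_refl _)
  · rintro ⟨A', h01, hrow, hcol, hsym⟩
    exact bwd m n hm hn R S t ht htn A' h01 hrow hcol hsym
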